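/- Let F(s) = Σ_{n≥1} f(n) n^{-s} be a nondegenerate ordinary Dirichlet series with f(n) ≥ 0, convergent for Re(s) ≥ s₀. Suppose F(k) ∈ ℚ for all integers k ≥ R ≥ s₀ − 2, and write F(k) = p_k/q_k with p_k, q_k coprime positive integers. Define D_m[F] = lcm(q_{R+2}, q_{R+3}, ..., q_{R+m}). Then D_m[F] grows at least exponentially in m: there exists C > 1 such that D_m[F] > C^m for infinitely many m. -/

import Mathlib

/-!
Let `k = R + m - 1`. All of `F k`, `F (k + 1)` have denominators dividing `D m`, so
`D m * (F k - F (k + 1))` is an integer, and it is positive because `f` has nonzero coefficients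
beyond `n = 1`. On the other hand the `n = 1` terms cancel in `F k - F (k + 1)`, and every other
term is at most `2 ^ (3 - m)` times the corresponding term of `F (R + 2)`. Hence
`D m ≥ 2 ^ (m - 3) / F (R + 2)`, which beats `(√2) ^ m` for large `m`.
-/

open Filter

theorem one_le_mul_sub_of_dvd {D p₁ q₁ p₂ q₂ : ℕ} (hD : D ≠ 0) (h₁ : q₁ ∣ D) (h₂ : q₂ ∣ D)
    (hlt : (p₂ : ℝ) / q₂ < p₁ / q₁) : 1 ≤ (D : ℝ) * ((p₁ : ℝ) / q₁ - p₂ / q₂) := by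
  have hint : ∀ {p q : ℕ}, q ∣ D → (D : ℝ) * (p / q) = ((D / q * p : ℕ) : ℝ) := fun {p q} hq => by
    have hq0 : (q : ℝ) ≠ 0 := Nat.cast_ne_zero.2 (ne_zero_of_dvd_ne_zero hD hq)
    rw [Nat.cast_mul, Nat.cast_div hq hq0]
    ring
  have hpos : 0 < (D : ℝ) * ((p₁ : ℝ) / q₁ - p₂ / q₂) :=
    mul_pos (by exact_mod_cast Nat.pos_of_ne_zero hD) (sub_pos.2 hlt)
  rw [mul_sub, hint h₁, hint h₂] at hpos ⊢
  have : D / q₂ * p₂ < D / q₁ * p₁ := by exact_mod_cast sub_pos.1 hpos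
  have : ((D / q₂ * p₂ : ℕ) : ℝ) + 1 ≤ (D / q₁ * p₁ : ℕ) := by exact_mod_cast this
  linarith

noncomputable def dirichletTerm (f : ℕ → ℝ) (k : ℤ) (n : ℕ) : ℝ :=
  f (n + 1) / ((n + 1 : ℕ) : ℝ) ^ k

namespace dirichletTerm

variable {f : ℕ → ℝ}

theorem nonneg (hf : ∀ n, 0 ≤ f n) (k : ℤ) (n : ℕ) : 0 ≤ dirichletTerm f k n :=
  div_nonneg (hf _) (zpow_nonneg (Nat.cast_nonneg _) _)

theorem zero_eq (k : ℤ) : dirichletTerm f k 0 = f 1 := by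
  simp [dirichletTerm]

theorem antitone (hf : ∀ n, 0 ≤ f n) (n : ℕ) : Antitone fun k => dirichletTerm f k n := by
  intro k k' hk
  have hbase : (1 : ℝ) ≤ ((n + 1 : ℕ) : ℝ) := by exact_mod_cast Nat.succ_pos n
  exact div_le_div_of_nonneg_left (hf _) (zpow_pos (by linarith) _)
    (zpow_le_zpow_right₀ hbase hk)

theorem lt_of_lt {k k' : ℤ} {n : ℕ} (hn : 0 < n) (hfn : 0 < f (n + 1)) (hk : k < k') :
    dirichletTerm f k' n < dirichletTerm f k n := by
  have hbase : (1 : ℝ) < ((n + 1 : ℕ) : ℝ) := by exact_mod_cast Nat.succ_lt_succ hn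
  exact div_lt_div_of_pos_left hfn (zpow_pos (by linarith) _) (zpow_lt_zpow_right₀ hbase hk)

theorem add_natCast_le (hf : ∀ n, 0 ≤ f n) (k : ℤ) (j : ℕ) {n : ℕ} (hn : 0 < n) :
    dirichletTerm f (k + j) n ≤ ((2 : ℝ) ^ j)⁻¹ * dirichletTerm f k n := by
  have hbase : (2 : ℝ) ≤ ((n + 1 : ℕ) : ℝ) := by exact_mod_cast Nat.succ_le_succ hn
  have hpos : (0 : ℝ) < ((n + 1 : ℕ) : ℝ) := by linarith
  rw [dirichletTerm, dirichletTerm, zpow_add₀ hpos.ne', zpow_natCast, inv_mul_eq_div, div_div]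
  gcongr
  exact hf _

theorem summable_of_le (hf : ∀ n, 0 ≤ f n) {k k' : ℤ} (hk : k ≤ k')
    (hs : Summable (dirichletTerm f k)) : Summable (dirichletTerm f k') :=
  hs.of_nonneg_of_le (nonneg hf k') fun n => antitone hf n hk

theorem tsum_sub_pos (hf : ∀ n, 0 ≤ f n) (hinf : {n : ℕ | f n ≠ 0}.Infinite) {k k' : ℤ}
    (hk : k < k') (hs : Summable (dirichletTerm f k)) :
    0 < ∑' n, dirichletTerm f k n - ∑' n, dirichletTerm f k' n := by
  obtain ⟨n, hfn, hn⟩ := hinf.exists_gt 1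
  obtain ⟨n, rfl⟩ : ∃ i, n = i + 1 := ⟨n - 1, by omega⟩
  have hs' := summable_of_le hf hk.le hs
  rw [← hs.tsum_sub hs']
  refine (hs.sub hs').tsum_pos (fun i => sub_nonneg.2 (antitone hf i hk.le)) n ?_
  exact sub_pos.2 (lt_of_lt (by omega) ((hf _).lt_of_ne' hfn) hk)

theorem tsum_sub_succ_le (hf : ∀ n, 0 ≤ f n) (k : ℤ) (j : ℕ)
    (hs : Summable (dirichletTerm f k)) :
    ∑' n, dirichletTerm f (k + j) n - ∑' n, dirichletTerm f (k + j + 1) n ≤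
      ((2 : ℝ) ^ j)⁻¹ * ∑' n, dirichletTerm f k n := by
  have hsj := summable_of_le hf (by omega : k ≤ k + j) hs
  have hsj1 := summable_of_le hf (by omega : k ≤ k + j + 1) hs
  rw [← hsj.tsum_sub hsj1, ← tsum_mul_left]
  refine (hsj.sub hsj1).tsum_le_tsum (fun n => ?_) (hs.mul_left _)
  rcases Nat.eq_zero_or_pos n with rfl | hn
  · rw [zero_eq, zero_eq, sub_self]
    exact mul_nonneg (by positivity) (nonneg hf k 0)
  · linarith [nonneg hf (k + j + 1) n, add_natCast_le hf k j hn]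

theorem two_pow_le_mul_tsum_of_dvd (hf : ∀ n, 0 ≤ f n) (hinf : {n : ℕ | f n ≠ 0}.Infinite)
    (k : ℤ) (j : ℕ) (hs : Summable (dirichletTerm f k)) {D p₁ q₁ p₂ q₂ : ℕ} (hD : D ≠ 0)
    (h₁ : q₁ ∣ D) (h₂ : q₂ ∣ D) (hF₁ : ∑' n, dirichletTerm f (k + j) n = p₁ / q₁)
    (hF₂ : ∑' n, dirichletTerm f (k + j + 1) n = p₂ / q₂) :
    (2 : ℝ) ^ j ≤ D * ∑' n, dirichletTerm f k n := by
  have hgap := tsum_sub_pos hf hinf (lt_add_one (k + j)) (summable_of_le hf (by omega) hs)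
  have hle := tsum_sub_succ_le hf k j hs
  rw [hF₁, hF₂] at hgap hle
  calc (2 : ℝ) ^ j = 2 ^ j * 1 := (mul_one _).symm
    _ ≤ 2 ^ j * (D * ((p₁ : ℝ) / q₁ - p₂ / q₂)) := by
      gcongr; exact one_le_mul_sub_of_dvd hD h₁ h₂ (sub_pos.1 hgap)
    _ ≤ 2 ^ j * (D * (((2 : ℝ) ^ j)⁻¹ * ∑' n, dirichletTerm f k n)) := by gcongr
    _ = D * ∑' n, dirichletTerm f k n := by field_simp

end dirichletTerm

theorem exists_one_lt_frequently_pow_lt {u : ℕ → ℝ} {c a : ℝ} (hc : 0 < c) (ha : 1 < a)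
    (h : ∀ᶠ m in atTop, c * a ^ m ≤ u m) : ∃ C : ℝ, 1 < C ∧ ∀ m₀ : ℕ, ∃ m ≥ m₀, u m > C ^ m := by
  have hC : 1 < √a := by rwa [Real.lt_sqrt zero_le_one, one_pow]
  refine ⟨√a, hC, fun m₀ => ?_⟩
  have hlarge : ∀ᶠ m in atTop, c⁻¹ < √a ^ m :=
    (tendsto_pow_atTop_atTop_of_one_lt hC).eventually_gt_atTop _
  obtain ⟨m, ⟨hcm, hu⟩, hm⟩ := ((hlarge.and h).and (eventually_ge_atTop m₀)).exists
  refine ⟨m, hm, ?_⟩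
  have hsq : a ^ m = √a ^ m * √a ^ m := by rw [← mul_pow, Real.mul_self_sqrt (by linarith)]
  calc √a ^ m = c * (c⁻¹ * √a ^ m) := by field_simp
    _ < c * (√a ^ m * √a ^ m) := by gcongr
    _ = c * a ^ m := by rw [hsq]
    _ ≤ u m := hu

theorem denominators_grow_exponentially (f : ℕ → ℝ) (s₀ : ℝ)
    (hf : ∀ n, 0 ≤ f n)
    (hconv : ∀ s : ℝ, s₀ ≤ s → Summable (fun m : ℕ => f (m + 1) / ((m + 1 : ℕ) : ℝ) ^ s))
    (hinf : {n : ℕ | f n ≠ 0}.Infinite)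
    (F : ℤ → ℝ) (hF : ∀ k : ℤ, F k = ∑' m : ℕ, f (m + 1) / (((m + 1 : ℕ) : ℝ)) ^ (k : ℤ))
    (R : ℤ) (hR : (R : ℝ) ≥ s₀ - 2)
    (p q : ℤ → ℕ)
    (hpq : ∀ k : ℤ, R ≤ k → 0 < p k ∧ 0 < q k ∧ Nat.Coprime (p k) (q k) ∧
      F k = (p k : ℝ) / (q k : ℝ))
    (D : ℕ → ℕ) (hD : ∀ m : ℕ, D m = (Finset.Icc 2 m).lcm (fun j => q (R + j))) :
    ∃ C : ℝ, 1 < C ∧ ∀ m₀ : ℕ, ∃ m ≥ m₀, (D m : ℝ) > C ^ m := by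
  have hF' : ∀ k, F k = ∑' n, dirichletTerm f k n := hF
  have hsum : Summable (dirichletTerm f (R + 2)) :=
    (hconv (R + 2) (by linarith)).congr fun n => by
      rw [dirichletTerm, ← Real.rpow_intCast]; push_cast; rfl
  have hF_pos : 0 < F (R + 2) := by
    obtain ⟨hp, hq, -, hFpq⟩ := hpq (R + 2) (by omega)
    rw [hFpq]; positivity
  have hD_ne : ∀ m, D m ≠ 0 := fun m => hD m ▸ Finset.lcm_ne_zero_iff.2 fun j hj =>
    (hpq (R + j) (by simp at hj; omega)).2.1.ne'
  have hbound : ∀ j : ℕ, (2 : ℝ) ^ j ≤ D (j + 3) * F (R + 2) := fun j => by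
    obtain ⟨-, -, -, hF₁⟩ := hpq (R + 2 + j) (by omega)
    obtain ⟨-, -, -, hF₂⟩ := hpq (R + 2 + j + 1) (by omega)
    have hdvd : ∀ i ∈ Finset.Icc 2 (j + 3), q (R + i) ∣ D (j + 3) := fun i hi =>
      hD _ ▸ Finset.dvd_lcm hi
    rw [hF'] at hF₁ hF₂ ⊢
    refine dirichletTerm.two_pow_le_mul_tsum_of_dvd hf hinf (R + 2) j hsum (hD_ne _)
      ?_ ?_ hF₁ hF₂
    · convert hdvd (j + 2) (by simp) using 2; push_cast; ring
    · convert hdvd (j + 3) (by simp) using 2; push_cast; ring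
  refine exists_one_lt_frequently_pow_lt (c := (8 * F (R + 2))⁻¹) (by positivity) one_lt_two
    (eventually_atTop.2 ⟨3, fun m hm => ?_⟩)
  obtain ⟨j, rfl⟩ := Nat.exists_eq_add_of_le' hm
  calc (8 * F (R + 2))⁻¹ * 2 ^ (j + 3) = 2 ^ j / F (R + 2) := by field_simp; ring
    _ ≤ D (j + 3) := (div_le_iff₀ hF_pos).2 (hbound j)
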